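/- Let (Ω, F, P) be a probability space and X a real random variable such that E[X^{2n}] ≤ (2n−1)!! K^n for all n ∈ ℕ and E[X^{2n−1}] = 0 for all n ∈ ℕ (some constant K > 0). Then E[e^{iX}] exists and |E[e^{iX}] − 1| ≤ e^{K/2} − 1. -/

import Mathlib

lemma factKey12 (k : ℕ) :
    (2*k).factorial = 2^k * k.factorial * Nat.doubleFactorial (2*k-1) := by
  cases k with
  | zero => rfl
  | succ m =>
    have h1 : 2*(m+1) = (2*m+1)+1 := by ring
    have h2 : 2*(m+1) - 1 = 2*m+1 := by omega
    rw [h2, h1, Nat.factorial_eq_mul_doubleFactorial (2*m+1), ← h1,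
      Nat.doubleFactorial_two_mul]

lemma ratioKey12 (K : ℝ) (k : ℕ) :
    (Nat.doubleFactorial (2*k-1) : ℝ) * K ^ k / (2*k).factorial
      = (K/2)^k / k.factorial := by
  have h2 : ((2*k).factorial : ℝ)
      = 2^k * k.factorial * (Nat.doubleFactorial (2*k-1)) := by
    exact_mod_cast congrArg (Nat.cast : ℕ → ℝ) (factKey12 k)
  have hd0 : (Nat.doubleFactorial (2*k-1) : ℝ) ≠ 0 :=
    Nat.cast_ne_zero.mpr (Nat.doubleFactorial_pos _).ne'
  have hf0 : (k.factorial : ℝ) ≠ 0 := Nat.cast_ne_zero.mpr k.factorial_ne_zero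
  rw [h2, div_pow]
  field_simp

open MeasureTheory in
theorem stmt12 {Ω : Type*} [MeasurableSpace Ω] (P : Measure Ω)
    [IsProbabilityMeasure P] (X : Ω → ℝ) (hX : Measurable X)
    (K : ℝ) (hK : 0 < K)
    (hinteven : ∀ n : ℕ, 1 ≤ n → Integrable (fun ω => X ω ^ (2*n)) P)
    (hintodd : ∀ n : ℕ, 1 ≤ n → Integrable (fun ω => X ω ^ (2*n - 1)) P)
    (heven : ∀ n : ℕ, 1 ≤ n →
      ∫ ω, X ω ^ (2*n) ∂P ≤ (Nat.doubleFactorial (2*n - 1) : ℝ) * K ^ n)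
    (hodd : ∀ n : ℕ, 1 ≤ n → ∫ ω, X ω ^ (2*n - 1) ∂P = 0) :
    Integrable (fun ω => Complex.exp (Complex.I * (X ω : ℂ))) P ∧
    ‖(∫ ω, Complex.exp (Complex.I * (X ω : ℂ)) ∂P) - 1‖
      ≤ Real.exp (K / 2) - 1 := by
  set g : ℕ → Ω → ℂ := fun n ω => (Complex.I * (X ω : ℂ)) ^ n / (n.factorial : ℂ)
    with hg
  have hr : HasSum (fun k : ℕ => (K/2)^k / k.factorial) (Real.exp (K/2)) := by
    rw [Real.exp_eq_exp_ℝ]; exact NormedSpace.expSeries_div_hasSum_exp (K/2)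
  have hevpow : ∀ (x : ℝ) (k : ℕ), 0 ≤ x ^ (2*k) := by
    intro x k; rw [pow_mul]; exact pow_nonneg (sq_nonneg x) k
  have habs_even : ∀ (x : ℝ) (k : ℕ), |x| ^ (2*k) = x ^ (2*k) := by
    intro x k; rw [← abs_pow, abs_of_nonneg (hevpow x k)]
  have hmEven : ∀ k : ℕ, ∫ ω, X ω ^ (2*k) ∂P
      ≤ (Nat.doubleFactorial (2*k-1) : ℝ) * K ^ k := by
    intro k
    rcases Nat.eq_zero_or_pos k with rfl | hk
    · simp
    · exact heven k hk
  have hmNonneg : ∀ k : ℕ, 0 ≤ ∫ ω, X ω ^ (2*k) ∂P :=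
    fun k => integral_nonneg fun ω => hevpow _ k
  have hintevenAll : ∀ k : ℕ, Integrable (fun ω => X ω ^ (2*k)) P := by
    intro k
    rcases Nat.eq_zero_or_pos k with rfl | hk
    · simp
    · exact hinteven k hk
  have hintabs : ∀ n : ℕ, Integrable (fun ω => |X ω| ^ n) P := by
    intro n
    rcases Nat.even_or_odd n with ⟨m, hm⟩ | ⟨m, hm⟩
    · have h2 : n = 2*m := by omega
      simp_rw [h2, habs_even]
      exact hintevenAll m
    · have h2 : n = 2*(m+1) - 1 := by omega
      have := (hintodd (m+1) (by omega)).abs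
      simp_rw [h2, ← abs_pow]
      exact this
  have hgmeas : ∀ n, AEStronglyMeasurable (g n) P := by
    intro n
    exact (((Complex.measurable_ofReal.comp hX).const_mul Complex.I).pow_const n
      |>.div_const _).aestronglyMeasurable
  have hnorm : ∀ n ω, ‖g n ω‖ = |X ω| ^ n / n.factorial := by
    intro n ω
    simp [hg, norm_div, norm_pow, Complex.norm_natCast]
  have hgint : ∀ n, Integrable (g n) P := by
    intro n
    exact Integrable.mono' ((hintabs n).div_const _) (hgmeas n)
      (Filter.Eventually.of_forall fun ω => le_of_eq (hnorm n ω))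
  have hbnorm : ∀ n, ∫ ω, ‖g n ω‖ ∂P = (∫ ω, |X ω| ^ n ∂P) / n.factorial := by
    intro n
    simp_rw [hnorm]
    exact integral_div _ _
  have hBe : ∀ k : ℕ, ∫ ω, |X ω| ^ (2*k) ∂P
      ≤ (Nat.doubleFactorial (2*k-1) : ℝ) * K ^ k := by
    intro k; simp_rw [habs_even]; exact hmEven k
  have hbe : ∀ k : ℕ, ∫ ω, ‖g (2*k) ω‖ ∂P ≤ (K/2)^k / k.factorial := by
    intro k
    rw [hbnorm, ← ratioKey12 K k]
    gcongr
    exact hBe k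
  have hptodd : ∀ (k : ℕ) (x : ℝ),
      |x| ^ (2*k+1) ≤ (x ^ (2*k) + x ^ (2*k+2)) / 2 := by
    intro k x
    have key := two_mul_le_add_sq (|x|^k) (|x|^(k+1))
    rw [mul_assoc, ← pow_add, ← pow_mul, ← pow_mul] at key
    have e1 : k + (k+1) = 2*k+1 := by ring
    have e2 : k * 2 = 2*k := by ring
    have e3 : (k+1) * 2 = 2*k+2 := by ring
    rw [e1, e2, e3] at key
    have h1 : |x| ^ (2*k) = x ^ (2*k) := habs_even x k
    have h2 : |x| ^ (2*k+2) = x ^ (2*k+2) := by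
      rw [show 2*k+2 = 2*(k+1) from by ring]; exact habs_even x (k+1)
    rw [h1, h2] at key
    linarith
  have hBo : ∀ k : ℕ, ∫ ω, |X ω| ^ (2*k+1) ∂P
      ≤ ((Nat.doubleFactorial (2*k-1) : ℝ) * K ^ k
        + (Nat.doubleFactorial (2*(k+1)-1) : ℝ) * K ^ (k+1)) / 2 := by
    intro k
    have hint2 : Integrable (fun ω => (X ω ^ (2*k) + X ω ^ (2*k+2)) / 2) P := by
      simp_rw [show 2*k+2 = 2*(k+1) from by ring]
      exact ((hintevenAll k).add (hintevenAll (k+1))).div_const 2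
    have step1 : ∫ ω, |X ω| ^ (2*k+1) ∂P
        ≤ ∫ ω, (X ω ^ (2*k) + X ω ^ (2*k+2)) / 2 ∂P :=
      integral_mono (hintabs (2*k+1)) hint2 fun ω => hptodd k (X ω)
    have step2 : ∫ ω, (X ω ^ (2*k) + X ω ^ (2*k+2)) / 2 ∂P
        = ((∫ ω, X ω ^ (2*k) ∂P) + ∫ ω, X ω ^ (2*(k+1)) ∂P) / 2 := by
      simp_rw [show 2*k+2 = 2*(k+1) from by ring]
      rw [integral_div, integral_add (hintevenAll k) (hintevenAll (k+1))]
    refine step1.trans (step2.le.trans ?_)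
    gcongr
    · exact hmEven k
    · exact hmEven (k+1)
  have hbo : ∀ k : ℕ, ∫ ω, ‖g (2*k+1) ω‖ ∂P
      ≤ (K/2)^k / k.factorial
        + (2*(k:ℝ)+2) * ((K/2)^(k+1) / (k+1).factorial) := by
    intro k
    rw [hbnorm]
    have hfpos1 : (0:ℝ) < (2*k+1).factorial := by positivity
    have hdnn : ∀ j : ℕ, 0 ≤ (Nat.doubleFactorial (2*j-1) : ℝ) * K ^ j := by
      intro j
      have : (0:ℝ) ≤ K ^ j := pow_nonneg hK.le j
      positivity
    set A : ℝ := (Nat.doubleFactorial (2*k-1) : ℝ) * K ^ k with hAdef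
    set B : ℝ := (Nat.doubleFactorial (2*(k+1)-1) : ℝ) * K ^ (k+1) with hBdef
    have hAnn : 0 ≤ A := hdnn k
    have hBnn : 0 ≤ B := hdnn (k+1)
    have hfe : ((2*(k+1)).factorial : ℝ) = (2*(k:ℝ)+2) * (2*k+1).factorial := by
      rw [show 2*(k+1) = (2*k+1)+1 from by ring, Nat.factorial_succ]
      push_cast; ring
    have h2k2 : (0:ℝ) < 2*(k:ℝ)+2 := by positivity
    calc (∫ ω, |X ω| ^ (2*k+1) ∂P) / (2*k+1).factorial
        ≤ ((A + B) / 2) / (2*k+1).factorial := by gcongr; exact hBo k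
      _ = ((A + B) / (2*k+1).factorial) / 2 := by ring
      _ ≤ (A + B) / (2*k+1).factorial :=
          half_le_self (div_nonneg (add_nonneg hAnn hBnn) hfpos1.le)
      _ = A / (2*k+1).factorial + B / (2*k+1).factorial := add_div _ _ _
      _ ≤ A / (2*k).factorial + (2*(k:ℝ)+2) * (B / (2*(k+1)).factorial) := by
          gcongr ?_ + ?_
          · gcongr
            omega
          · apply le_of_eq
            rw [hfe]
            field_simp
      _ = (K/2)^k / k.factorial
          + (2*(k:ℝ)+2) * ((K/2)^(k+1) / (k+1).factorial) := by
          rw [hAdef, hBdef, ratioKey12 K k, ratioKey12 K (k+1)]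
  have hshiftid : ∀ k : ℕ, (K/2)^k / k.factorial
      + (2*(k:ℝ)+2) * ((K/2)^(k+1) / (k+1).factorial)
      = (1 + K) * ((K/2)^k / k.factorial) := by
    intro k
    have hfk : ((k+1).factorial : ℝ) = (k+1) * k.factorial := by
      rw [Nat.factorial_succ]; push_cast; ring
    have hf0 : (k.factorial : ℝ) ≠ 0 := Nat.cast_ne_zero.mpr k.factorial_ne_zero
    rw [hfk, pow_succ]
    field_simp
  have hbsumOdd : Summable (fun k : ℕ => (K/2)^k / k.factorial
      + (2*(k:ℝ)+2) * ((K/2)^(k+1) / (k+1).factorial)) := by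
    rw [funext hshiftid]
    exact hr.summable.mul_left (1+K)
  have hbnonneg : ∀ n, 0 ≤ ∫ ω, ‖g n ω‖ ∂P :=
    fun n => integral_nonneg fun ω => norm_nonneg _
  have hbsum : Summable (fun n => ∫ ω, ‖g n ω‖ ∂P) := by
    refine Summable.even_add_odd ?_ ?_
    · exact Summable.of_nonneg_of_le (fun k => hbnonneg _) hbe hr.summable
    · exact Summable.of_nonneg_of_le (fun k => hbnonneg _) hbo hbsumOdd
  have hpt : ∀ ω, ∑' n, g n ω = Complex.exp (Complex.I * (X ω : ℂ)) := by
    intro ω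
    rw [Complex.exp_eq_exp_ℂ]
    exact (NormedSpace.expSeries_div_hasSum_exp _).tsum_eq
  have hHS : HasSum (fun n => ∫ ω, g n ω ∂P)
      (∫ ω, Complex.exp (Complex.I * (X ω : ℂ)) ∂P) := by
    have h := hasSum_integral_of_summable_integral_norm (μ := P) hgint hbsum
    rwa [show (fun a => ∑' i, g i a)
      = (fun ω => Complex.exp (Complex.I * (X ω : ℂ))) from funext hpt] at h
  have hval : ∀ n, ∫ ω, g n ω ∂P
      = (Complex.I ^ n / n.factorial) * ((∫ ω, X ω ^ n ∂P : ℝ) : ℂ) := by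
    intro n
    have hpw : ∀ ω, g n ω = (Complex.I ^ n / n.factorial) • ((X ω ^ n : ℝ) : ℂ) := by
      intro ω
      simp only [hg, smul_eq_mul, mul_pow]
      push_cast
      ring
    calc ∫ ω, g n ω ∂P
        = ∫ ω, (Complex.I ^ n / n.factorial) • ((X ω ^ n : ℝ) : ℂ) ∂P := by
          simp_rw [hpw]
      _ = (Complex.I ^ n / n.factorial) • ∫ ω, ((X ω ^ n : ℝ) : ℂ) ∂P :=
          integral_smul _ _
      _ = (Complex.I ^ n / n.factorial) * ((∫ ω, X ω ^ n ∂P : ℝ) : ℂ) := by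
          rw [smul_eq_mul]
          congr 1
          exact integral_ofReal
  have hvodd : ∀ k : ℕ, ∫ ω, g (2*k+1) ω ∂P = 0 := by
    intro k
    rw [hval]
    have e : 2*(k+1)-1 = 2*k+1 := by omega
    have h := hodd (k+1) (by omega)
    rw [e] at h
    rw [h]
    simp
  have hveven_norm : ∀ k : ℕ, ‖∫ ω, g (2*k) ω ∂P‖ ≤ (K/2)^k / k.factorial := by
    intro k
    rw [hval, norm_mul, norm_div, norm_pow, Complex.norm_I, one_pow,
      Complex.norm_natCast, Complex.norm_real, Real.norm_eq_abs,
      abs_of_nonneg (hmNonneg k), one_div, inv_mul_eq_div, ← ratioKey12 K k]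
    gcongr
    exact hmEven k
  have hintexp : Integrable (fun ω => Complex.exp (Complex.I * (X ω : ℂ))) P := by
    refine Integrable.mono' (integrable_const 1)
      ((Complex.measurable_exp.comp
        ((Complex.measurable_ofReal.comp hX).const_mul Complex.I)).aestronglyMeasurable)
      (Filter.Eventually.of_forall fun ω => ?_)
    rw [Complex.norm_exp]
    simp
  refine ⟨hintexp, ?_⟩
  have hEsum : Summable (fun k => ∫ ω, g (2*k) ω ∂P) := by
    have := hHS.summable.comp_injective
      (i := fun k : ℕ => 2*k) (fun a b h => by
        have h2 : 2*a = 2*b := h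
        omega)
    exact this
  have hOsum : HasSum (fun k => ∫ ω, g (2*k+1) ω ∂P) 0 := by
    rw [funext hvodd]; exact hasSum_zero
  have hE : HasSum (fun k => ∫ ω, g (2*k) ω ∂P) (∑' k, ∫ ω, g (2*k) ω ∂P) :=
    hEsum.hasSum
  have hSe : (∫ ω, Complex.exp (Complex.I * (X ω : ℂ)) ∂P)
      = ∑' k, ∫ ω, g (2*k) ω ∂P := by
    have h := hHS.unique (hE.even_add_odd hOsum)
    simpa using h
  have h0 : ∫ ω, g 0 ω ∂P = 1 := by
    simp [hg]
  have hshiftE : HasSum (fun k => ∫ ω, g (2*(k+1)) ω ∂P)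
      ((∑' k, ∫ ω, g (2*k) ω ∂P) - 1) := by
    have h := (hasSum_nat_add_iff' (f := fun k => ∫ ω, g (2*k) ω ∂P) 1).mpr hE
    simpa [h0] using h
  have hrshift : HasSum (fun k : ℕ => (K/2)^(k+1) / (k+1).factorial)
      (Real.exp (K/2) - 1) := by
    have h := (hasSum_nat_add_iff'
      (f := fun k : ℕ => (K/2)^k / k.factorial) 1).mpr hr
    simpa using h
  have hnormsum : Summable (fun k => ‖∫ ω, g (2*(k+1)) ω ∂P‖) :=
    Summable.of_nonneg_of_le (fun k => norm_nonneg _)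
      (fun k => hveven_norm (k+1)) hrshift.summable
  rw [hSe, ← hshiftE.tsum_eq]
  calc ‖∑' k, ∫ ω, g (2*(k+1)) ω ∂P‖
      ≤ ∑' k, ‖∫ ω, g (2*(k+1)) ω ∂P‖ := norm_tsum_le_tsum_norm hnormsum
    _ ≤ ∑' k : ℕ, (K/2)^(k+1) / (k+1).factorial :=
        hnormsum.tsum_le_tsum (fun k => hveven_norm (k+1)) hrshift.summable
    _ = Real.exp (K/2) - 1 := hrshift.tsum_eq
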